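/- (Telescoping bound in the convergence proof) Under the assumptions of the proximal gradient convergence theorem, each step satisfies ξ(x^i) − ξ(x*) ≤ (1/2η)(‖x^{i−1} − x*‖² − ‖x^i − x*‖²), and summing over i = 1,…,t gives Σᵢ (ξ(x^i) − ξ(x*)) ≤ ‖x⁰ − x*‖²/(2η). -/

import Mathlib

open RealInnerProductSpace

variable {n : ℕ}

/-- The convex subdifferential of `g` at `x`. -/
def subdiff (g : EuclideanSpace ℝ (Fin n) → ℝ) (x : EuclideanSpace ℝ (Fin n)) :
    Set (EuclideanSpace ℝ (Fin n)) :=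
  {v | ∀ y, g x + ⟪v, y - x⟫ ≤ g y}

/-- `z` is the value of the proximal operator `prox_{ηg}` at `v`, i.e. `z` minimizes
`x ↦ g x + (1/(2η))‖x − v‖²`. -/
def IsProx (g : EuclideanSpace ℝ (Fin n) → ℝ) (η : ℝ)
    (v z : EuclideanSpace ℝ (Fin n)) : Prop :=
  ∀ x, g z + 1 / (2 * η) * ‖z - v‖ ^ 2 ≤ g x + 1 / (2 * η) * ‖x - v‖ ^ 2

open scoped Classical in
/-- The proximal operator `prox_{ηg}` (defined via choice of a minimizer). -/
noncomputable def prox (g : EuclideanSpace ℝ (Fin n) → ℝ) (η : ℝ)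
    (v : EuclideanSpace ℝ (Fin n)) : EuclideanSpace ℝ (Fin n) :=
  if h : ∃ z, IsProx g η v z then h.choose else 0

/-!
At the new iterate `q = prox_{ηg}(p - η ∇f p)` three inequalities hold: the descent lemma
`f q ≤ f p + ⟪∇f p, q - p⟫ + (C/2)‖q - p‖²` (from the Lipschitz gradient), the gradient
inequality of the convex `f` at `p` tested against `z`, and the optimality condition
`(p - q)/η - ∇f p ∈ ∂g(q)` of the proximal point. In their sum the gradient terms cancel,
leaving `(1/η)⟪p - q, q - z⟫ + (C/2)‖p - q‖²`, which is at most
`(1/2η)(‖p - z‖² - ‖q - z‖²)` because `Cη ≤ 1`. Summing over the iterates telescopes.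
The proximal point exists since a convex function on `ℝⁿ` decreases at most linearly at
infinity, so `g + ‖· - v‖²/2η` is coercive.
-/

open Set Filter Topology

lemma nonneg_of_forall_mul_add_sq_mul_nonneg {A B : ℝ}
    (h : ∀ t : ℝ, 0 < t → t ≤ 1 → 0 ≤ t * A + t ^ 2 * B) : 0 ≤ A := by
  have hlim : Tendsto (fun t : ℝ => A + t * B) (𝓝[>] 0) (𝓝 A) := by
    have : Continuous fun t : ℝ => A + t * B := by fun_prop
    simpa using (this.tendsto 0).mono_left nhdsWithin_le_nhds
  refine ge_of_tendsto hlim ?_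
  filter_upwards [Ioc_mem_nhdsGT one_pos] with t ⟨ht₀, ht₁⟩
  have := h t ht₀ ht₁
  have : 0 ≤ t * (A + t * B) := by linarith
  exact nonneg_of_mul_nonneg_right this ht₀

section Smooth

variable {E : Type*} [NormedAddCommGroup E] [InnerProductSpace ℝ E] [CompleteSpace E]
  {f : E → ℝ}

lemma hasDerivAt_comp_add_smul (hfd : Differentiable ℝ f) (x d : E) (t : ℝ) :
    HasDerivAt (fun s : ℝ => f (x + s • d)) ⟪gradient f (x + t • d), d⟫ t := by
  have hline : HasDerivAt (fun s : ℝ => x + s • d) d t := by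
    simpa using ((hasDerivAt_id t).smul_const d).const_add x
  exact ((hfd _).hasGradientAt.hasFDerivAt.comp_hasDerivAt t hline).congr_deriv
    (InnerProductSpace.toDual_apply_apply ..)

lemma ConvexOn.add_inner_gradient_le (hf : ConvexOn ℝ univ f) (hfd : Differentiable ℝ f)
    (x y : E) : f x + ⟪gradient f x, y - x⟫ ≤ f y := by
  have hline : ConvexOn ℝ univ fun s : ℝ => f (x + s • (y - x)) := by
    simpa [Function.comp_def, AffineMap.lineMap_apply_module', add_comm] using
      hf.comp_affineMap (AffineMap.lineMap x y)
  have := hline.le_slope_of_hasDerivAt (mem_univ 0) (mem_univ 1) one_pos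
    (hasDerivAt_comp_add_smul hfd x (y - x) 0)
  simp only [slope_def_field, zero_smul, add_zero, one_smul, add_sub_cancel, sub_zero,
    div_one] at this
  linarith

lemma le_add_inner_gradient_add_sq {C : ℝ} (hfd : Differentiable ℝ f)
    (hlip : ∀ x y, ‖gradient f x - gradient f y‖ ≤ C * ‖x - y‖) (x y : E) :
    f y ≤ f x + ⟪gradient f x, y - x⟫ + C / 2 * ‖y - x‖ ^ 2 := by
  set d := y - x
  set ψ : ℝ → ℝ := fun s => f (x + s • d) - s * ⟪gradient f x, d⟫ - C / 2 * ‖d‖ ^ 2 * s ^ 2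
  have hψ (s : ℝ) :
      HasDerivAt ψ (⟪gradient f (x + s • d) - gradient f x, d⟫ - C * ‖d‖ ^ 2 * s) s := by
    have h₂ := (hasDerivAt_id s).mul_const ⟪gradient f x, d⟫
    have h₃ := (hasDerivAt_pow 2 s).const_mul (C / 2 * ‖d‖ ^ 2)
    refine (((hasDerivAt_comp_add_smul hfd x d s).sub h₂).sub h₃).congr_deriv ?_
    rw [inner_sub_left]
    ring
  have hanti : AntitoneOn ψ (Icc 0 1) := by
    refine antitoneOn_of_hasDerivWithinAt_nonpos (convex_Icc 0 1)
      (fun s _ => (hψ s).continuousAt.continuousWithinAt) (fun s _ => (hψ s).hasDerivWithinAt)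
      fun s hs => ?_
    rw [interior_Icc] at hs
    have hgrad : ‖gradient f (x + s • d) - gradient f x‖ ≤ C * (s * ‖d‖) := by
      simpa [norm_smul, abs_of_pos hs.1] using hlip (x + s • d) x
    have := (real_inner_le_norm _ d).trans (mul_le_mul_of_nonneg_right hgrad (norm_nonneg d))
    linarith
  have := hanti (left_mem_Icc.2 zero_le_one) (right_mem_Icc.2 zero_le_one) zero_le_one
  simp only [ψ, d, zero_smul, add_zero, one_smul, zero_mul, sub_zero, one_mul, one_pow, mul_one,
    add_sub_cancel] at this
  linarith

end Smooth

lemma ConvexOn.exists_sub_mul_norm_sub_le {E : Type*} [NormedAddCommGroup E] [NormedSpace ℝ E]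
    [FiniteDimensional ℝ E] {g : E → ℝ} (hg : ConvexOn ℝ univ g) (v : E) :
    ∃ b M : ℝ, ∀ y, b - M * ‖y - v‖ ≤ g y := by
  obtain ⟨u₀, -, hu₀⟩ := (isCompact_closedBall v 1).exists_isMinOn
    (Metric.nonempty_closedBall.2 zero_le_one)
    (continuousOn_univ.1 (hg.continuousOn isOpen_univ)).continuousOn
  have hm : ∀ u, ‖u - v‖ ≤ 1 → g u₀ ≤ g u := fun u hu => hu₀ (mem_closedBall_iff_norm.2 hu)
  have hmv : g u₀ ≤ g v := hm v (by simp)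
  refine ⟨g u₀, g v - g u₀, fun y => ?_⟩
  set r := ‖y - v‖
  rcases le_or_gt r 1 with hr | hr
  · nlinarith [hm y hr, norm_nonneg (y - v)]
  · -- compare with the point of `[v, y]` at distance 1 from `v`
    have hr₀ : 0 < r := one_pos.trans hr
    have hu : ‖((1 - r⁻¹) • v + r⁻¹ • y) - v‖ ≤ 1 := by
      have : (1 - r⁻¹) • v + r⁻¹ • y - v = r⁻¹ • (y - v) := by
        rw [sub_smul, one_smul, smul_sub]; abel
      rw [this, norm_smul, Real.norm_of_nonneg (inv_nonneg.2 hr₀.le), inv_mul_cancel₀ hr₀.ne']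
    have hconv := (hm _ hu).trans (hg.2 (mem_univ v) (mem_univ y)
      (sub_nonneg.2 (inv_le_one_of_one_le₀ hr.le)) (inv_nonneg.2 hr₀.le) (by ring))
    have := mul_le_mul_of_nonneg_left hconv hr₀.le
    rw [smul_eq_mul, smul_eq_mul, mul_add, ← mul_assoc, ← mul_assoc, mul_sub, mul_one,
      mul_inv_cancel₀ hr₀.ne', one_mul] at this
    linarith

section Prox

variable {g : EuclideanSpace ℝ (Fin n) → ℝ} {η : ℝ}

theorem exists_isProx (hg : ConvexOn ℝ univ g) (hη : 0 < η) (v : EuclideanSpace ℝ (Fin n)) :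
    ∃ z, IsProx g η v z := by
  obtain ⟨b, M, hbM⟩ := hg.exists_sub_mul_norm_sub_le v
  have hcont : Continuous fun y => g y + 1 / (2 * η) * ‖y - v‖ ^ 2 :=
    (continuousOn_univ.1 (hg.continuousOn isOpen_univ)).add (by fun_prop)
  have hnorm : Tendsto (fun y => ‖y - v‖) (cocompact _) atTop :=
    tendsto_atTop_mono (fun y => norm_sub_norm_le y v)
      (tendsto_atTop_add_const_right _ _ tendsto_norm_cocompact_atTop)
  have hquad : Tendsto (fun y => b + ‖y - v‖ * (‖y - v‖ / (2 * η) - M)) (cocompact _) atTop :=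
    tendsto_atTop_add_const_left _ _ (hnorm.atTop_mul_atTop₀
      (tendsto_atTop_add_const_right _ _ (hnorm.atTop_div_const (by positivity))))
  refine hcont.exists_forall_le (tendsto_atTop_mono (fun y => ?_) hquad)
  have := hbM y
  have : ‖y - v‖ * (‖y - v‖ / (2 * η) - M) = 1 / (2 * η) * ‖y - v‖ ^ 2 - M * ‖y - v‖ := by ring
  linarith

theorem isProx_prox (hg : ConvexOn ℝ univ g) (hη : 0 < η) (v : EuclideanSpace ℝ (Fin n)) :
    IsProx g η v (prox g η v) := by
  rw [prox, dif_pos (exists_isProx hg hη v)]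
  exact (exists_isProx hg hη v).choose_spec

theorem IsProx.inv_smul_sub_mem_subdiff (hg : ConvexOn ℝ univ g)
    {v z : EuclideanSpace ℝ (Fin n)} (hz : IsProx g η v z) : η⁻¹ • (v - z) ∈ subdiff g z := by
  intro y
  set d := y - z
  suffices 0 ≤ g y - g z - η⁻¹ * ⟪v - z, d⟫ by
    rw [real_inner_smul_left]
    linarith
  refine nonneg_of_forall_mul_add_sq_mul_nonneg (B := ‖d‖ ^ 2 / (2 * η)) fun t ht₀ ht₁ => ?_
  have hconv : g (z + t • d) ≤ (1 - t) * g z + t * g y := by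
    have hpt : (1 - t) • z + t • y = z + t • d := by simp only [d]; module
    simpa only [hpt, smul_eq_mul] using
      hg.2 (mem_univ z) (mem_univ y) (sub_nonneg.2 ht₁) ht₀.le (by ring)
  have hsq : ‖z + t • d - v‖ ^ 2 = ‖z - v‖ ^ 2 - 2 * t * ⟪v - z, d⟫ + t ^ 2 * ‖d‖ ^ 2 := by
    rw [show z + t • d - v = t • d - (v - z) by abel, norm_sub_sq_real, real_inner_smul_left,
      norm_smul, Real.norm_of_nonneg ht₀.le, norm_sub_rev v z, real_inner_comm d]
    ring
  have hmin := hz (z + t • d)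
  rw [hsq] at hmin
  have hexpand : 1 / (2 * η) * (‖z - v‖ ^ 2 - 2 * t * ⟪v - z, d⟫ + t ^ 2 * ‖d‖ ^ 2) =
      1 / (2 * η) * ‖z - v‖ ^ 2 - t * (η⁻¹ * ⟪v - z, d⟫) + t ^ 2 * (‖d‖ ^ 2 / (2 * η)) := by
    ring
  linarith

theorem IsProx.add_sub_add_le_of_gradient_step {f : EuclideanSpace ℝ (Fin n) → ℝ} {C : ℝ}
    (hf : ConvexOn ℝ univ f) (hfd : Differentiable ℝ f) (hg : ConvexOn ℝ univ g)
    (hlip : ∀ x y, ‖gradient f x - gradient f y‖ ≤ C * ‖x - y‖) (hη : 0 < η) (hCη : C * η ≤ 1)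
    {p q : EuclideanSpace ℝ (Fin n)} (hq : IsProx g η (p - η • gradient f p) q)
    (z : EuclideanSpace ℝ (Fin n)) :
    f q + g q - (f z + g z) ≤ 1 / (2 * η) * (‖p - z‖ ^ 2 - ‖q - z‖ ^ 2) := by
  set u := gradient f p
  have hprox : g q + η⁻¹ * ⟪p - q, z - q⟫ - ⟪u, z - q⟫ ≤ g z := by
    have := hq.inv_smul_sub_mem_subdiff hg z
    rwa [show p - η • u - q = (p - q) - η • u by abel, real_inner_smul_left, inner_sub_left,
      real_inner_smul_left, mul_sub, ← mul_assoc, inv_mul_cancel₀ hη.ne', one_mul,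
      ← add_sub_assoc] at this
  have hdesc := le_add_inner_gradient_add_sq hfd hlip p q
  have hcvx := hf.add_inner_gradient_le hfd p z
  have hlin : ⟪u, q - p⟫ - ⟪u, z - p⟫ + ⟪u, z - q⟫ = 0 := by
    simp only [inner_sub_right]
    ring
  have hC : C / 2 * ‖q - p‖ ^ 2 ≤ 1 / (2 * η) * ‖p - q‖ ^ 2 := by
    rw [norm_sub_rev]
    gcongr ?_ * _
    rw [le_div_iff₀ (by positivity)]
    linarith
  have hsq : 1 / (2 * η) * (‖p - z‖ ^ 2 - ‖q - z‖ ^ 2) =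
      1 / (2 * η) * ‖p - q‖ ^ 2 - η⁻¹ * ⟪p - q, z - q⟫ := by
    rw [show p - z = (p - q) - (z - q) by abel, norm_sub_sq_real, norm_sub_rev q z]
    ring
  linarith

end Prox

theorem sum_Icc_le_sub_of_le_sub {a d : ℕ → ℝ} (h : ∀ i, a (i + 1) ≤ d i - d (i + 1)) (t : ℕ) :
    ∑ i ∈ Finset.Icc 1 t, a i ≤ d 0 - d t := by
  induction t with
  | zero => simp
  | succ t ih =>
    rw [Finset.sum_Icc_succ_top (Nat.le_add_left 1 t)]
    linarith [h t]

theorem prox_grad_telescoping_bound_general (f g : EuclideanSpace ℝ (Fin n) → ℝ)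
    (hf : ConvexOn ℝ Set.univ f) (hfd : Differentiable ℝ f)
    (hg : ConvexOn ℝ Set.univ g) (Cf : ℝ)
    (hlip : ∀ x y, ‖gradient f x - gradient f y‖ ≤ Cf * ‖x - y‖)
    (η : ℝ) (hη : 0 < η) (hη' : η ≤ 1 / Cf)
    (xstar : EuclideanSpace ℝ (Fin n))
    (x : ℕ → EuclideanSpace ℝ (Fin n))
    (hiter : ∀ t : ℕ, x (t + 1) = prox g η (x t - η • gradient f (x t))) :
    (∀ i : ℕ, 1 ≤ i →
        f (x i) + g (x i) - (f xstar + g xstar) ≤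
          1 / (2 * η) * (‖x (i - 1) - xstar‖ ^ 2 - ‖x i - xstar‖ ^ 2)) ∧
      ∀ t : ℕ, ∑ i ∈ Finset.Icc 1 t, (f (x i) + g (x i) - (f xstar + g xstar)) ≤
        ‖x 0 - xstar‖ ^ 2 / (2 * η) := by
  have hCf : 0 < Cf := one_div_pos.1 (hη.trans_le hη')
  have hCη : Cf * η ≤ 1 := by rwa [le_div_iff₀ hCf, mul_comm] at hη'
  have hstep (t : ℕ) : f (x (t + 1)) + g (x (t + 1)) - (f xstar + g xstar) ≤
      1 / (2 * η) * ‖x t - xstar‖ ^ 2 - 1 / (2 * η) * ‖x (t + 1) - xstar‖ ^ 2 := by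
    rw [← mul_sub]
    refine IsProx.add_sub_add_le_of_gradient_step hf hfd hg hlip hη hCη ?_ xstar
    exact hiter t ▸ isProx_prox hg hη _
  refine ⟨fun i hi => ?_, fun t => ?_⟩
  · obtain ⟨t, rfl⟩ := Nat.exists_eq_add_of_le' hi
    simpa [mul_sub] using hstep t
  · have hsum := sum_Icc_le_sub_of_le_sub
      (a := fun i => f (x i) + g (x i) - (f xstar + g xstar))
      (d := fun i => 1 / (2 * η) * ‖x i - xstar‖ ^ 2) hstep t
    have : 0 ≤ 1 / (2 * η) * ‖x t - xstar‖ ^ 2 := by positivity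
    rw [div_eq_mul_one_div, mul_comm]
    linarith

/-- Telescoping bound in the proximal gradient convergence proof. -/
theorem prox_grad_telescoping_bound (f g : EuclideanSpace ℝ (Fin n) → ℝ)
    (hf : ConvexOn ℝ Set.univ f) (hfd : Differentiable ℝ f)
    (hg : ConvexOn ℝ Set.univ g) (Cf : ℝ) (hCf : 0 < Cf)
    (hlip : ∀ x y, ‖gradient f x - gradient f y‖ ≤ Cf * ‖x - y‖)
    (η : ℝ) (hη : 0 < η) (hη' : η ≤ 1 / Cf)
    (xstar : EuclideanSpace ℝ (Fin n)) (hmin : ∀ y, f xstar + g xstar ≤ f y + g y)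
    (x : ℕ → EuclideanSpace ℝ (Fin n))
    (hiter : ∀ t : ℕ, x (t + 1) = prox g η (x t - η • gradient f (x t))) :
    (∀ i : ℕ, 1 ≤ i →
        f (x i) + g (x i) - (f xstar + g xstar) ≤
          1 / (2 * η) * (‖x (i - 1) - xstar‖ ^ 2 - ‖x i - xstar‖ ^ 2)) ∧
      ∀ t : ℕ, ∑ i ∈ Finset.Icc 1 t, (f (x i) + g (x i) - (f xstar + g xstar)) ≤
        ‖x 0 - xstar‖ ^ 2 / (2 * η) :=
  prox_grad_telescoping_bound_general f g hf hfd hg Cf hlip η hη hη' xstar x hiter
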